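/- arXiv:1302.3235 — 2 statements merged into one kernel-verified Lean document; each statement's English description precedes it below -/
import Mathlib

section
/- Let Z ∈ ℂⁿˣⁿ be nonsingular with polar decomposition Z = U_p H (U_p unitary, H Hermitian positive definite). Then for the spectral norm, min over Q ∈ U(n) and over all matrix logarithms X with exp X = Q* Z of ‖X‖₂ equals ‖log H‖₂ = max(|log σ₁(Z)|, |log σₙ(Z)|), attained at Q = U_p with X the principal logarithm. -/
/-!
Write `exp X = W H` with `W = Qᴴ U_p` unitary. Every spectral value `z` of `H` satisfies
`|z| ≤ ‖H‖ = ‖exp X‖ ≤ e^{‖X‖}` and, since `H⁻¹ = exp (-X) W`, also `|z|⁻¹ ≤ ‖H⁻¹‖ ≤ e^{‖X‖}`;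
applied to `σ₁` and `σₙ` this gives `‖X‖ ≥ max (|log σ₁|, |log σₙ|)`. Conversely the spectrum
of the Hermitian `L` consists of logarithms of spectral values of `exp L = H`, so its
spectral radius `‖L‖` is at most that maximum, and `X = L`, `Q = U_p` attains the bound.
-/

open Matrix
open scoped ComplexOrder

/-- Spectral norm (largest singular value) of a complex matrix. -/
noncomputable def specNorm {m : ℕ} (X : Matrix (Fin m) (Fin m) ℂ) : ℝ :=
  ‖Matrix.toEuclideanCLM (𝕜 := ℂ) X‖

lemma NormedSpace.norm_exp_le_exp_norm {𝔸 : Type*} [NormedRing 𝔸] [NormedAlgebra ℂ 𝔸]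
    [CompleteSpace 𝔸] [NormOneClass 𝔸] (x : 𝔸) : ‖exp x‖ ≤ Real.exp ‖x‖ := by
  rw [exp_eq_tsum ℂ, Real.exp_eq_exp_ℝ, exp_eq_tsum ℝ]
  refine (norm_tsum_le_tsum_norm (norm_expSeries_summable' (𝕂 := ℂ) x)).trans ?_
  refine Summable.tsum_le_tsum (fun n => ?_) (norm_expSeries_summable' (𝕂 := ℂ) x)
    (expSeries_summable' (𝕂 := ℝ) ‖x‖)
  rw [norm_smul, norm_inv, RCLike.norm_natCast, smul_eq_mul]
  gcongr
  exact norm_pow_le _ _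

lemma spectrum.norm_inv_le_norm_inv {𝕜 A : Type*} [NormedField 𝕜] [NormedRing A]
    [NormedAlgebra 𝕜 A] [CompleteSpace A] [NormOneClass A] (a : Aˣ) {z : 𝕜}
    (hz : z ∈ spectrum 𝕜 (a : A)) : ‖z‖⁻¹ ≤ ‖(↑a⁻¹ : A)‖ := by
  lift z to 𝕜ˣ using (spectrum.ne_zero_of_mem_of_unit hz).isUnit
  rw [← norm_inv, ← Units.val_inv_eq_inv_val]
  exact spectrum.norm_le_norm_of_mem (spectrum.inv_mem_iff.mp hz)

lemma Real.abs_log_le_of_le_exp_of_inv_le_exp {r t : ℝ} (hr : 0 < r) (h : r ≤ Real.exp t)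
    (h' : r⁻¹ ≤ Real.exp t) : |Real.log r| ≤ t := by
  rw [← Real.log_le_iff_le_exp hr] at h
  rw [← Real.log_le_iff_le_exp (inv_pos.mpr hr), Real.log_inv] at h'
  exact abs_le.mpr ⟨by linarith, h⟩

section CStarAlgebra

variable {A : Type*} [CStarAlgebra A]

lemma abs_log_norm_le_norm_of_exp_eq_unitary_mul [Nontrivial A] {x u h : A}
    (hu : u ∈ unitary A) (hx : NormedSpace.exp x = u * h) {z : ℂ} (hz : z ∈ spectrum ℂ h) :
    |Real.log ‖z‖| ≤ ‖x‖ := by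
  -- the invertibility lemmas for `NormedSpace.exp` are stated over `ℚ`
  let : NormedAlgebra ℚ A := .restrictScalars ℚ ℂ A
  set v : Aˣ := (Unitary.toUnits ⟨u, hu⟩)⁻¹ * (NormedSpace.isUnit_exp x).unit
  have hv : h = v := by
    simp [v, hx, ← mul_assoc, ← Unitary.star_eq_inv, Unitary.coe_star,
      Unitary.star_mul_self_of_mem hu]
  have hv_inv : (↑v⁻¹ : A) = NormedSpace.exp (-x) * u := by
    simp [v, ← Ring.inverse_exp, ← Ring.inverse_unit]
  rw [hv] at hz
  refine Real.abs_log_le_of_le_exp_of_inv_le_exp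
    (norm_pos_iff.mpr (spectrum.ne_zero_of_mem_of_unit hz)) ?_ ?_
  · calc ‖z‖ ≤ ‖h‖ := hv ▸ spectrum.norm_le_norm_of_mem hz
      _ = ‖NormedSpace.exp x‖ := by rw [hx, CStarRing.norm_mem_unitary_mul h hu]
      _ ≤ Real.exp ‖x‖ := NormedSpace.norm_exp_le_exp_norm x
  · calc ‖z‖⁻¹ ≤ ‖(↑v⁻¹ : A)‖ := spectrum.norm_inv_le_norm_inv v hz
      _ = ‖NormedSpace.exp (-x)‖ := by rw [hv_inv, CStarRing.norm_mul_mem_unitary _ hu]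
      _ ≤ Real.exp ‖x‖ := by simpa using NormedSpace.norm_exp_le_exp_norm (-x)

lemma IsSelfAdjoint.norm_le_of_forall_mem_spectrum {a : A} (ha : IsSelfAdjoint a) {C : ℝ}
    (hC : 0 ≤ C) (h : ∀ z ∈ spectrum ℂ a, ‖z‖ ≤ C) : ‖a‖ ≤ C := by
  rw [← ha.toReal_spectralRadius_complex_eq_norm]
  refine ENNReal.toReal_le_of_le_ofReal hC (iSup₂_le fun z hz => ?_)
  rw [← ENNReal.ofReal_coe_nnreal, coe_nnnorm]
  exact ENNReal.ofReal_le_ofReal (h z hz)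

lemma IsSelfAdjoint.norm_le_of_forall_mem_spectrum_exp {a : A} (ha : IsSelfAdjoint a) {C : ℝ}
    (hC : 0 ≤ C) (h : ∀ w ∈ spectrum ℂ (NormedSpace.exp a), |Real.log ‖w‖| ≤ C) : ‖a‖ ≤ C := by
  refine ha.norm_le_of_forall_mem_spectrum hC fun z hz => ?_
  have hexp := h _ (Complex.exp_eq_exp_ℂ ▸ spectrum.exp_mem_exp a hz)
  rw [Complex.norm_exp, Real.log_exp] at hexp
  rwa [ha.mem_spectrum_eq_re hz, Complex.norm_real, Real.norm_eq_abs]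

end CStarAlgebra

lemma Antitone.abs_log_le_max_abs_log {n : ℕ} {σ : Fin (n + 1) → ℝ} (hσ : Antitone σ)
    (hσpos : ∀ i, 0 < σ i) (i : Fin (n + 1)) :
    |Real.log (σ i)| ≤ max |Real.log (σ 0)| |Real.log (σ (Fin.last n))| :=
  max_comm (α := ℝ) _ _ ▸ abs_le_max_abs_abs (Real.log_le_log (hσpos _) (hσ (Fin.le_last i)))
    (Real.log_le_log (hσpos _) (hσ (Fin.zero_le i)))

open scoped Matrix.Norms.L2Operator in
theorem min_specNorm_log_general (n : ℕ) (Z Up H L : Matrix (Fin (n + 1)) (Fin (n + 1)) ℂ)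
    (hUp : Up ∈ Matrix.unitaryGroup (Fin (n + 1)) ℂ)
    (hpolar : Z = Up * H)
    (hL : L.IsHermitian) (hexpL : NormedSpace.exp L = H)
    (σ : Fin (n + 1) → ℝ) (hσ : Antitone σ) (hσpos : ∀ i, 0 < σ i)
    (V : Matrix (Fin (n + 1)) (Fin (n + 1)) ℂ)
    (hV : V ∈ Matrix.unitaryGroup (Fin (n + 1)) ℂ)
    (hdiag : H = V * Matrix.diagonal (fun i => (σ i : ℂ)) * Vᴴ) :
    IsLeast {r : ℝ | ∃ Q ∈ Matrix.unitaryGroup (Fin (n + 1)) ℂ,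
        ∃ X : Matrix (Fin (n + 1)) (Fin (n + 1)) ℂ,
          NormedSpace.exp X = Qᴴ * Z ∧ r = specNorm X} (specNorm L) ∧
    specNorm L = max |Real.log (σ 0)| |Real.log (σ (Fin.last n))| := by
  set C := max |Real.log (σ 0)| |Real.log (σ (Fin.last n))|
  have hspec : spectrum ℂ H = Set.range (fun i => (σ i : ℂ)) := by
    rw [hdiag]
    exact (Unitary.spectrum_star_right_conjugate (U := ⟨V, hV⟩)).trans (spectrum_diagonal _)
  have habs_log : ∀ w ∈ spectrum ℂ H, |Real.log ‖w‖| ≤ C := by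
    rw [hspec]
    rintro _ ⟨i, rfl⟩
    simp only [Complex.norm_real, Real.norm_eq_abs, abs_of_pos (hσpos i)]
    exact hσ.abs_log_le_max_abs_log hσpos i
  -- `specNorm X` is definitionally the L2 operator norm `‖X‖`
  have lower : ∀ Q ∈ Matrix.unitaryGroup (Fin (n + 1)) ℂ, ∀ X, NormedSpace.exp X = Qᴴ * Z →
      C ≤ specNorm X := by
    intro Q hQ X hX
    have hX' : NormedSpace.exp X = (Qᴴ * Up) * H := by rw [hX, hpolar, mul_assoc]
    have hlog_le := fun i => abs_log_norm_le_norm_of_exp_eq_unitary_mul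
      (mul_mem (Unitary.star_mem hQ) hUp) hX' (hspec ▸ ⟨i, rfl⟩ : (σ i : ℂ) ∈ spectrum ℂ H)
    simp only [Complex.norm_real, Real.norm_eq_abs, abs_of_pos (hσpos _)] at hlog_le
    exact max_le (hlog_le 0) (hlog_le _)
  have hexpL' : NormedSpace.exp L = Upᴴ * Z := by
    rw [hexpL, hpolar, ← mul_assoc, ← star_eq_conjTranspose, Unitary.star_mul_self_of_mem hUp,
      one_mul]
  have hLC : specNorm L = C := le_antisymm
    (hL.isSelfAdjoint.norm_le_of_forall_mem_spectrum_exp (by positivity) (hexpL ▸ habs_log))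
    (lower Up hUp L hexpL')
  refine ⟨⟨⟨Up, hUp, L, hexpL', rfl⟩, ?_⟩, hLC⟩
  rintro r ⟨Q, hQ, X, hX, rfl⟩
  exact hLC ▸ lower Q hQ X hX

/-- For nonsingular `Z = U_p H` (polar decomposition) the minimum of `‖X‖₂` over unitary `Q`
and all logarithms `X` of `Q* Z` is `‖log H‖₂ = max (|log σ₁|, |log σₙ|)`, attained at
`Q = U_p` with `X = log H` the principal (Hermitian) logarithm. -/
theorem min_specNorm_log (n : ℕ) (Z Up H L : Matrix (Fin (n + 1)) (Fin (n + 1)) ℂ)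
    (hZ : IsUnit Z.det)
    (hUp : Up ∈ Matrix.unitaryGroup (Fin (n + 1)) ℂ)
    (hH : H.PosDef) (hpolar : Z = Up * H)
    (hL : L.IsHermitian) (hexpL : NormedSpace.exp L = H)
    (σ : Fin (n + 1) → ℝ) (hσ : Antitone σ) (hσpos : ∀ i, 0 < σ i)
    (V : Matrix (Fin (n + 1)) (Fin (n + 1)) ℂ)
    (hV : V ∈ Matrix.unitaryGroup (Fin (n + 1)) ℂ)
    (hdiag : H = V * Matrix.diagonal (fun i => (σ i : ℂ)) * Vᴴ) :
    IsLeast {r : ℝ | ∃ Q ∈ Matrix.unitaryGroup (Fin (n + 1)) ℂ,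
        ∃ X : Matrix (Fin (n + 1)) (Fin (n + 1)) ℂ,
          NormedSpace.exp X = Qᴴ * Z ∧ r = specNorm X} (specNorm L) ∧
    specNorm L = max |Real.log (σ 0)| |Real.log (σ (Fin.last n))| :=
  min_specNorm_log_general n Z Up H L hUp hpolar hL hexpL σ hσ hσpos V hV hdiag
end

section
/- Let Z ∈ ℂⁿˣⁿ be nonsingular with polar decomposition Z = U_p H. Then for the spectral norm, min over Q ∈ U(n) and all logarithms X with exp X = Q* Z of ‖sym X‖₂ equals ‖log H‖₂. -/
/-!
Write `W = Qᴴ U_p`, so that `exp X = W exp L` with `W` unitary and `L = log H` Hermitian.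
For any operator `A` on a Hilbert space, `‖exp A‖ ≤ exp ‖ℜ A‖`, where `ℜ A = (A + A*)/2`:
the function `t ↦ ‖exp (t A) v‖²` has derivative `2 Re ⟪A w, w⟫ ≤ 2 ‖ℜ A‖ ‖w‖²`, so
Grönwall applies. Hence `‖exp L‖ = ‖exp X‖ ≤ exp ‖ℜ X‖`, and likewise
`‖exp (-L)‖ = ‖exp (-X)‖ ≤ exp ‖ℜ X‖` because `exp (-X) = exp (-L) W*`. As `L` is self-adjoint,
`‖L‖` or `-‖L‖` lies in its spectrum, so `exp ‖L‖ ≤ max ‖exp L‖ ‖exp (-L)‖ ≤ exp ‖ℜ X‖`.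
The bound is attained at `Q = U_p`, `X = L`.
-/

open Matrix
open scoped ComplexOrder

open NormedSpace
open scoped InnerProductSpace ComplexStarModule

lemma exp_neg_eq_of_exp_eq_unitary_mul_exp {𝔸 : Type*} [NormedRing 𝔸] [NormedAlgebra ℂ 𝔸]
    [CompleteSpace 𝔸] [StarRing 𝔸] {y t u : 𝔸} (hu : u ∈ unitary 𝔸)
    (h : exp y = u * exp t) : exp (-y) = exp (-t) * star u := by
  let : NormedAlgebra ℚ 𝔸 := .restrictScalars ℚ ℂ 𝔸
  have hright : exp y * (exp (-t) * star u) = 1 := by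
    rw [h, mul_assoc, ← mul_assoc (exp t), ← exp_add_of_commute (Commute.refl t).neg_right,
      add_neg_cancel, exp_zero, one_mul, Unitary.mul_star_self_of_mem hu]
  calc exp (-y) = exp (-y) * (exp y * (exp (-t) * star u)) := by rw [hright, mul_one]
    _ = exp (-t) * star u := by
      rw [← mul_assoc, ← exp_add_of_commute (Commute.refl y).neg_left, neg_add_cancel,
        exp_zero, one_mul]

lemma spectrum.real_exp_le_norm_exp {A : Type*} [NormedRing A] [NormedAlgebra ℝ A]
    [CompleteSpace A] [NormOneClass A] {a : A} {r : ℝ} (hr : r ∈ spectrum ℝ a) :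
    Real.exp r ≤ ‖exp a‖ := by
  have h := spectrum.norm_le_norm_of_mem (spectrum.exp_mem_exp a hr)
  rwa [← Real.exp_eq_exp_ℝ, Real.norm_of_nonneg (Real.exp_pos r).le] at h

lemma IsSelfAdjoint.real_exp_norm_le_max {A : Type*} [CStarAlgebra A] [Nontrivial A] {a : A}
    (ha : IsSelfAdjoint a) : Real.exp ‖a‖ ≤ max ‖NormedSpace.exp a‖ ‖NormedSpace.exp (-a)‖ := by
  rcases CStarAlgebra.norm_or_neg_norm_mem_spectrum ha with h | h
  · exact le_max_of_le_left (spectrum.real_exp_le_norm_exp h)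
  · refine le_max_of_le_right (spectrum.real_exp_le_norm_exp ?_)
    rw [← spectrum.neg_eq]
    simpa using h

namespace ContinuousLinearMap

variable {E : Type*} [NormedAddCommGroup E] [InnerProductSpace ℂ E] [CompleteSpace E]

lemma re_inner_apply_self_le_norm_realPart (A : E →L[ℂ] E) (w : E) :
    (⟪A w, w⟫_ℂ).re ≤ ‖(ℜ A : E →L[ℂ] E)‖ * ‖w‖ ^ 2 := by
  set S : E →L[ℂ] E := (ℜ A : E →L[ℂ] E)
  have hS : (⟪S w, w⟫_ℂ).re = (⟪A w, w⟫_ℂ).re := by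
    simp only [S, realPart_apply_coe, _root_.smul_apply, _root_.add_apply, star_eq_adjoint,
      RCLike.real_smul_eq_coe_smul (K := ℂ), inner_smul_left, inner_add_left, adjoint_inner_left]
    rw [← inner_conj_symm w (A w), Complex.add_conj]
    simp
  calc (⟪A w, w⟫_ℂ).re = (⟪S w, w⟫_ℂ).re := hS.symm
    _ ≤ ‖S w‖ * ‖w‖ := (Complex.re_le_norm _).trans (norm_inner_le_norm _ _)
    _ ≤ ‖S‖ * ‖w‖ * ‖w‖ := by gcongr; exact S.le_opNorm w
    _ = ‖S‖ * ‖w‖ ^ 2 := by ring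

lemma hasDerivAt_exp_smul_apply (A : E →L[ℂ] E) (v : E) (t : ℝ) :
    HasDerivAt (fun s : ℝ => exp (s • A) v) (A (exp (t • A) v)) t :=
  ((apply ℂ E v).restrictScalars ℝ).hasFDerivAt.comp_hasDerivAt t
    (hasDerivAt_exp_smul_const' A t)

lemma norm_exp_apply_sq_le (A : E →L[ℂ] E) (v : E) :
    ‖exp A v‖ ^ 2 ≤ ‖v‖ ^ 2 * Real.exp (2 * ‖(ℜ A : E →L[ℂ] E)‖) := by
  let := InnerProductSpace.rclikeToReal ℂ E
  set K := ‖(ℜ A : E →L[ℂ] E)‖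
  set f : ℝ → ℝ := fun t => ‖exp (t • A) v‖ ^ 2
  have hf (t : ℝ) : HasDerivAt f (2 * ⟪exp (t • A) v, A (exp (t • A) v)⟫_ℝ) t :=
    (hasDerivAt_exp_smul_apply A v t).norm_sq
  have hbound (t : ℝ) : 2 * ⟪exp (t • A) v, A (exp (t • A) v)⟫_ℝ ≤ 2 * K * f t := by
    have hre := re_inner_apply_self_le_norm_realPart A (exp (t • A) v)
    rw [real_inner_eq_re_inner, inner_re_symm, RCLike.re_to_complex]
    linarith
  have hgronwall := le_gronwallBound_of_liminf_deriv_right_le (δ := ‖v‖ ^ 2) (ε := 0) (b := 1)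
    (fun t _ => (hf t).continuousAt.continuousWithinAt)
    (fun t _ r hr => (hf t).hasDerivWithinAt.liminf_right_slope_le hr) (by simp [f])
    (fun t _ => by simpa using hbound t) 1 ⟨zero_le_one, le_rfl⟩
  simpa [f, gronwallBound_ε0] using hgronwall

lemma norm_exp_le_exp_norm_realPart (A : E →L[ℂ] E) :
    ‖exp A‖ ≤ Real.exp ‖(ℜ A : E →L[ℂ] E)‖ := by
  set K := ‖(ℜ A : E →L[ℂ] E)‖
  refine opNorm_le_bound _ (Real.exp_nonneg K) fun v => ?_
  refine (pow_le_pow_iff_left₀ (norm_nonneg _) (by positivity) two_ne_zero).mp ?_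
  calc ‖exp A v‖ ^ 2 ≤ ‖v‖ ^ 2 * Real.exp (2 * K) := norm_exp_apply_sq_le A v
    _ = (Real.exp K * ‖v‖) ^ 2 := by rw [mul_pow, ← Real.exp_nat_mul]; push_cast; ring

theorem norm_le_norm_realPart_of_exp_eq_unitary_mul_exp {T Y W : E →L[ℂ] E}
    (hT : IsSelfAdjoint T) (hW : W ∈ unitary (E →L[ℂ] E)) (h : exp Y = W * exp T) :
    ‖T‖ ≤ ‖(ℜ Y : E →L[ℂ] E)‖ := by
  rcases subsingleton_or_nontrivial E with _ | _
  · simp [Subsingleton.elim T 0]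
  have hpos : ‖exp T‖ ≤ Real.exp ‖(ℜ Y : E →L[ℂ] E)‖ := by
    rw [← CStarRing.norm_mem_unitary_mul _ hW, ← h]
    exact norm_exp_le_exp_norm_realPart Y
  have hneg : ‖exp (-T)‖ ≤ Real.exp ‖(ℜ Y : E →L[ℂ] E)‖ := by
    rw [← CStarRing.norm_mul_mem_unitary _ (Unitary.star_mem hW),
      ← exp_neg_eq_of_exp_eq_unitary_mul_exp hW h]
    simpa using norm_exp_le_exp_norm_realPart (-Y)
  exact Real.exp_le_exp.mp (hT.real_exp_norm_le_max.trans (max_le hpos hneg))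

end ContinuousLinearMap

lemma toEuclideanCLM_exp {n : ℕ} (M : Matrix (Fin n) (Fin n) ℂ) :
    toEuclideanCLM (𝕜 := ℂ) (exp M) = exp (toEuclideanCLM (𝕜 := ℂ) M) := by
  -- `map_exp` needs some Banach-algebra norm on matrices; `exp` itself does not depend on it.
  open scoped Matrix.Norms.L2Operator in
  let : NormedAlgebra ℚ (Matrix (Fin n) (Fin n) ℂ) := .restrictScalars ℚ ℂ _
  exact map_exp (toEuclideanCLM (𝕜 := ℂ) (n := Fin n)) (LinearMap.continuous_of_finiteDimensional
    (toEuclideanCLM (𝕜 := ℂ) (n := Fin n)).toAlgEquiv.toLinearMap) M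

lemma specNorm_half_smul_add_conjTranspose {n : ℕ} (X : Matrix (Fin n) (Fin n) ℂ) :
    specNorm ((1 / 2 : ℂ) • (X + Xᴴ)) =
      ‖(ℜ (toEuclideanCLM (𝕜 := ℂ) X) :
        EuclideanSpace ℂ (Fin n) →L[ℂ] EuclideanSpace ℂ (Fin n))‖ := by
  rw [specNorm, realPart_apply_coe, RCLike.real_smul_eq_coe_smul (K := ℂ), map_smul, map_add,
    ← star_eq_conjTranspose, map_star]
  norm_num

theorem min_specNorm_sym_log_general (n : ℕ) (Z Up H L : Matrix (Fin n) (Fin n) ℂ)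
    (hUp : Up ∈ Matrix.unitaryGroup (Fin n) ℂ)
    (hpolar : Z = Up * H)
    (hL : L.IsHermitian) (hexpL : NormedSpace.exp L = H) :
    IsLeast {r : ℝ | ∃ Q ∈ Matrix.unitaryGroup (Fin n) ℂ,
        ∃ X : Matrix (Fin n) (Fin n) ℂ,
          NormedSpace.exp X = Qᴴ * Z ∧ r = specNorm ((1 / 2 : ℂ) • (X + Xᴴ))}
      (specNorm L) := by
  constructor
  · refine ⟨Up, hUp, L, ?_, ?_⟩
    · rw [hpolar, ← mul_assoc, ← star_eq_conjTranspose, Unitary.star_mul_self_of_mem hUp,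
        one_mul, hexpL]
    · rw [hL.eq, ← two_smul ℂ L, smul_smul]
      norm_num
  · rintro _ ⟨Q, hQ, X, hX, rfl⟩
    rw [specNorm_half_smul_add_conjTranspose]
    refine ContinuousLinearMap.norm_le_norm_realPart_of_exp_eq_unitary_mul_exp
      (W := toEuclideanCLM (𝕜 := ℂ) (Qᴴ * Up)) ?_ ?_ ?_
    · exact hL.isSelfAdjoint.map _
    · exact Unitary.map_mem _ (mul_mem (Unitary.star_mem hQ) hUp)
    · rw [← toEuclideanCLM_exp, ← toEuclideanCLM_exp, ← map_mul, hX, hpolar, hexpL, mul_assoc]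

/-- For nonsingular `Z = U_p H`, the minimum of `‖sym X‖₂` over unitary `Q` and all
logarithms `X` of `Q* Z` equals `‖log H‖₂`. -/
theorem min_specNorm_sym_log (n : ℕ) (Z Up H L : Matrix (Fin n) (Fin n) ℂ)
    (hZ : IsUnit Z.det)
    (hUp : Up ∈ Matrix.unitaryGroup (Fin n) ℂ)
    (hH : H.PosDef) (hpolar : Z = Up * H)
    (hL : L.IsHermitian) (hexpL : NormedSpace.exp L = H) :
    IsLeast {r : ℝ | ∃ Q ∈ Matrix.unitaryGroup (Fin n) ℂ,
        ∃ X : Matrix (Fin n) (Fin n) ℂ,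
          NormedSpace.exp X = Qᴴ * Z ∧ r = specNorm ((1 / 2 : ℂ) • (X + Xᴴ))}
      (specNorm L) :=
  min_specNorm_sym_log_general n Z Up H L hUp hpolar hL hexpL
end
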